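/- arXiv:1402.2397 — 8 statements merged into one kernel-verified Lean document; each statement's English description precedes it below -/
import Mathlib

section
/- In the triangle configuration, for all i ≠ j in {1,…,k}, the permutation σ_j⁻¹∘σ_i is an involution, i.e. (σ_j⁻¹∘σ_i)∘(σ_j⁻¹∘σ_i) = id, and moreover σ_i(l) ≠ σ_j(l) for every l ∈ {1,…,k}; consequently, for each fixed l ∈ {1,…,k}, the map j ↦ σ_j(l) is a bijection of {1,…,k} onto itself. -/
/-! Fix `i ≠ j` and `l`, and put `p = σ_i l`, `q = σ_j l`. Equating the two expressions of `γ_l`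
and multiplying by `δ_{li}` gives `β_p - c β_q = ± α_i ± α_j` with `c = ±1`; if `p = q` this is a
nontrivial relation among `α_i, α_j, β_p`. Now let `σ_j m = p` and `r = σ_i m`: the same
computation for `γ_m` gives `β_p - c' β_r = ± α_i ± α_j`. Depending on the signs, the difference
or the sum of the two relations involves at most three of `α_i, α_j, β_p, β_q, β_r` and is
nontrivial unless `q = r`. Hence `σ_i m = σ_j l`, i.e. `σ_j⁻¹ σ_i` swaps `l` and `m`. -/

/-- A family of vectors is `3`-independent if any three members with pairwise
distinct indices are linearly independent. -/
def ThreeIndep {V : Type*} [AddCommGroup V] [Module ℝ V] {I : Type*} (w : I → V) : Prop :=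
  ∀ i j l : I, i ≠ j → i ≠ l → j ≠ l → LinearIndependent ℝ ![w i, w j, w l]

section ThreeIndep

variable {V ι κ : Type*} [AddCommGroup V] [Module ℝ V]

theorem ThreeIndep.eq_zero_of_smul_add_smul_add_smul_eq_zero {w : ι → V} (hw : ThreeIndep w)
    {i j l : ι} (hij : i ≠ j) (hil : i ≠ l) (hjl : j ≠ l) {a b c : ℝ}
    (h : a • w i + b • w j + c • w l = 0) : a = 0 ∧ b = 0 ∧ c = 0 := by
  have hcoeff := Fintype.linearIndependent_iff.mp (hw i j l hij hil hjl) ![a, b, c]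
    (by simpa [Fin.sum_univ_three] using h)
  exact ⟨hcoeff 0, hcoeff 1, hcoeff 2⟩

variable {a : ι → V} {b : κ → V}

theorem ThreeIndep.eq_zero_of_sub_smul_self_eq (h : ThreeIndep (Sum.elim a b)) {i j : ι}
    (hij : i ≠ j) {p : κ} {c s t : ℝ} (hrel : b p - c • b p = s • a i + t • a j) : s = 0 := by
  have hsum : s • a i + t • a j + (c - 1) • b p = 0 := by
    linear_combination (norm := module) -hrel
  exact (h.eq_zero_of_smul_add_smul_add_smul_eq_zero (i := .inl i) (j := .inl j) (l := .inr p)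
    (by simpa using hij) (by simp) (by simp) hsum).1

theorem ThreeIndep.eq_of_sub_smul_eq_of_sub_smul_eq (h : ThreeIndep (Sum.elim a b)) {i j : ι}
    {p q r : κ} (hpq : p ≠ q) (hpr : p ≠ r) {c c' s₁ s₂ t₁ t₂ : ℝ} (hc : c ≠ 0)
    (hs : |s₁| = |s₂|) (ht : |t₁| = |t₂|)
    (h₁ : b p - c • b q = s₁ • a i + t₁ • a j) (h₂ : b p - c' • b r = s₂ • a i + t₂ • a j) :
    q = r := by
  by_contra hqr
  have no_relation : ∀ x : ι ⊕ κ, x ≠ .inr q → x ≠ .inr r → ∀ {u : ℝ},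
      u • Sum.elim a b x + c • b q - c' • b r = 0 → False := fun x hxq hxr u hrel =>
    hc (h.eq_zero_of_smul_add_smul_add_smul_eq_zero hxq hxr (by simpa using hqr)
      (by simpa [sub_eq_add_neg, ← neg_smul] using hrel)).2.1
  rcases abs_eq_abs.mp hs with rfl | rfl <;> rcases abs_eq_abs.mp ht with rfl | rfl
  · exact no_relation (.inl i) (by simp) (by simp) (u := 0)
      (by rw [Sum.elim_inl]; linear_combination (norm := module) h₂ - h₁)
  · exact no_relation (.inl j) (by simp) (by simp) (u := -(2 * t₂))
      (by rw [Sum.elim_inl]; linear_combination (norm := module) h₂ - h₁)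
  · exact no_relation (.inl i) (by simp) (by simp) (u := -(2 * s₂))
      (by rw [Sum.elim_inl]; linear_combination (norm := module) h₂ - h₁)
  · have hsum : (2 : ℝ) • b p + (-c) • b q + (-c') • b r = 0 := by
      linear_combination (norm := module) h₁ + h₂
    have := (h.eq_zero_of_smul_add_smul_add_smul_eq_zero (i := .inr p) (j := .inr q)
      (l := .inr r) (by simpa using hpq) (by simpa using hpr) (by simpa using hqr) hsum).1
    norm_num at this

end ThreeIndep

theorem sub_smul_eq_of_smul_add_smul_eq {V : Type*} [AddCommGroup V] [Module ℝ V]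
    {a a' u v : V} {e e' d d' : ℝ} (hd : d * d = 1)
    (h : e • a + d • u = e' • a' + d' • v) :
    u - (d * d') • v = (-(d * e)) • a + (d * e') • a' := by
  linear_combination (norm := module) d • h - hd • u

namespace TriangleConfig

variable {V ι : Type*} [AddCommGroup V] [Module ℝ V] {α β γ : ι → V} {ε δ : ι → ι → ℝ}
  {σ : ι → Equiv.Perm ι}

theorem beta_sub_smul_beta_eq (hδ : ∀ i j, |δ i j| = 1)
    (hR : ∀ i j, γ i = ε i j • α j + δ i j • β (σ j i)) (l i j : ι) :
    β (σ i l) - (δ l i * δ l j) • β (σ j l) = (-(δ l i * ε l i)) • α i + (δ l i * ε l j) • α j :=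
  sub_smul_eq_of_smul_add_smul_eq (by rw [← abs_mul_abs_self, hδ, one_mul])
    ((hR l i).symm.trans (hR l j))

theorem sigma_apply_ne (hε : ∀ i j, |ε i j| = 1) (hδ : ∀ i j, |δ i j| = 1)
    (hR : ∀ i j, γ i = ε i j • α j + δ i j • β (σ j i)) (hI : ThreeIndep (Sum.elim α β))
    {i j : ι} (hij : i ≠ j) (l : ι) : σ i l ≠ σ j l := by
  intro hl
  have hrel := beta_sub_smul_beta_eq hδ hR l i j
  rw [← hl] at hrel
  have hzero := congrArg abs (hI.eq_zero_of_sub_smul_self_eq hij hrel)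
  simp [abs_mul, hε, hδ] at hzero

theorem sigma_apply_eq_of_sigma_apply_eq (hε : ∀ i j, |ε i j| = 1) (hδ : ∀ i j, |δ i j| = 1)
    (hR : ∀ i j, γ i = ε i j • α j + δ i j • β (σ j i)) (hI : ThreeIndep (Sum.elim α β))
    {i j : ι} (hij : i ≠ j) {l m : ι} (h : σ j m = σ i l) : σ i m = σ j l := by
  have hlm : l ≠ m := by
    rintro rfl
    exact sigma_apply_ne hε hδ hR hI hij l h.symm
  have hrel_m := beta_sub_smul_beta_eq hδ hR m j i
  rw [h, add_comm] at hrel_m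
  refine (hI.eq_of_sub_smul_eq_of_sub_smul_eq (sigma_apply_ne hε hδ hR hI hij l)
    ((σ i).injective.ne hlm) ?_ ?_ ?_ (beta_sub_smul_beta_eq hδ hR l i j) hrel_m).symm
  · rw [← abs_ne_zero, abs_mul, hδ, hδ]
    norm_num
  all_goals simp [abs_mul, hε, hδ]

end TriangleConfig

theorem triangle_config_sigma_involutive_no_fixed_points_general
    {V : Type*} [AddCommGroup V] [Module ℝ V]
    (k : ℕ)
    (α β γ : Fin k → V)
    (ε δ : Fin k → Fin k → ℝ)
    (hε : ∀ i j, ε i j = 1 ∨ ε i j = -1)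
    (hδ : ∀ i j, δ i j = 1 ∨ δ i j = -1)
    (σ : Fin k → Equiv.Perm (Fin k))
    (hR2 : ∀ i j, γ i = ε i j • α j + δ i j • β (σ j i))
    (hI1 : ThreeIndep (Sum.elim α β)) :
    (∀ i j : Fin k, i ≠ j → ((σ j)⁻¹ * σ i) * ((σ j)⁻¹ * σ i) = 1) ∧
    (∀ i j : Fin k, i ≠ j → ∀ l : Fin k, σ i l ≠ σ j l) ∧
    (∀ l : Fin k, Function.Bijective (fun j : Fin k => σ j l)) := by
  have hε' : ∀ i j, |ε i j| = 1 := fun i j => (abs_eq zero_le_one).mpr (hε i j)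
  have hδ' : ∀ i j, |δ i j| = 1 := fun i j => (abs_eq zero_le_one).mpr (hδ i j)
  have hne : ∀ i j : Fin k, i ≠ j → ∀ l, σ i l ≠ σ j l := fun i j hij =>
    TriangleConfig.sigma_apply_ne hε' hδ' hR2 hI1 hij
  refine ⟨fun i j hij => ?_, hne, fun l => ?_⟩
  · ext l : 1
    have hswap := TriangleConfig.sigma_apply_eq_of_sigma_apply_eq hε' hδ' hR2 hI1 hij
      (l := l) (m := (σ j)⁻¹ (σ i l)) (by simp)
    simp only [Equiv.Perm.mul_apply, hswap, Equiv.Perm.one_apply]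
    exact (σ j).symm_apply_apply l
  · exact Finite.injective_iff_bijective.mp fun a b hab =>
      by_contra fun hab' => hne a b hab' l hab

/-- Sublemma: in the triangle configuration, for `i ≠ j` the permutation `σ_j⁻¹ ∘ σ_i`
is an involution without fixed points, and for fixed `l` the map `j ↦ σ_j l` is a
bijection. -/
theorem triangle_config_sigma_involutive_no_fixed_points
    {V : Type*} [AddCommGroup V] [Module ℝ V]
    (k : ℕ) (hk : 0 < k)
    (α β γ : Fin k → V)
    (ε δ : Fin k → Fin k → ℝ)
    (hε : ∀ i j, ε i j = 1 ∨ ε i j = -1)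
    (hδ : ∀ i j, δ i j = 1 ∨ δ i j = -1)
    (σ : Fin k → Equiv.Perm (Fin k))
    (hσ1 : σ ⟨0, hk⟩ = 1)
    (hR1 : ∀ i, γ i = α ⟨0, hk⟩ - β i)
    (hR2 : ∀ i j, γ i = ε i j • α j + δ i j • β (σ j i))
    (hI1 : ThreeIndep (Sum.elim α β))
    (hI2 : ThreeIndep (Sum.elim α γ))
    (hI3 : ThreeIndep (Sum.elim β γ)) :
    (∀ i j : Fin k, i ≠ j → ((σ j)⁻¹ * σ i) * ((σ j)⁻¹ * σ i) = 1) ∧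
    (∀ i j : Fin k, i ≠ j → ∀ l : Fin k, σ i l ≠ σ j l) ∧
    (∀ l : Fin k, Function.Bijective (fun j : Fin k => σ j l)) :=
  triangle_config_sigma_involutive_no_fixed_points_general k α β γ ε δ hε hδ σ hR2 hI1
end

section
/- In the triangle configuration, for every i ∈ {1,…,k} and every j ∈ {1,…,k} with j ≠ 1, one has δ_{ij} = 1 and ε_{σ_j(i),j} = ε_{ij}; in other words, γ_i = ε_{ij}·α_j + β_{σ_j(i)} and γ_{σ_j(i)} = ε_{ij}·α_j + β_i. -/
theorem LinearIndependent.triple_iff {R M : Type*} [Ring R] [AddCommGroup M] [Module R M]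
    {x y z : M} :
    LinearIndependent R ![x, y, z] ↔
      ∀ a b c : R, a • x + b • y + c • z = 0 → a = 0 ∧ b = 0 ∧ c = 0 := by
  rw [Fintype.linearIndependent_iff]
  refine ⟨fun h a b c hrel => ?_, fun h g hg => ?_⟩
  · have h0 := h ![a, b, c] (by simpa [Fin.sum_univ_three] using hrel)
    exact ⟨h0 0, h0 1, h0 2⟩
  · obtain ⟨h0, h1, h2⟩ := h (g 0) (g 1) (g 2) (by simpa [Fin.sum_univ_three] using hg)
    intro i
    fin_cases i <;> assumption

namespace ThreeIndep

variable {V : Type*} [AddCommGroup V] [Module ℝ V] {κ ι : Type*} {α : κ → V} {β : ι → V}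

theorem inl_inl_inr (h : ThreeIndep (Sum.elim α β)) {i j : κ} (hij : i ≠ j) (l : ι) :
    LinearIndependent ℝ ![α i, α j, β l] :=
  h (.inl i) (.inl j) (.inr l) (by simpa using hij) (by simp) (by simp)

theorem inl_inr_inr (h : ThreeIndep (Sum.elim α β)) (i : κ) {j l : ι} (hjl : j ≠ l) :
    LinearIndependent ℝ ![α i, β j, β l] :=
  h (.inl i) (.inr j) (.inr l) (by simp) (by simp) (by simpa using hjl)

theorem inr_inr_inr (h : ThreeIndep (Sum.elim α β)) {i j l : ι} (hij : i ≠ j) (hil : i ≠ l)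
    (hjl : j ≠ l) : LinearIndependent ℝ ![β i, β j, β l] :=
  h (.inr i) (.inr j) (.inr l) (by simpa using hij) (by simpa using hil) (by simpa using hjl)

end ThreeIndep

namespace TriangleConfig

variable {V : Type*} [AddCommGroup V] [Module ℝ V] {κ ι : Type*} {α : κ → V} {β : ι → V}
  {ε δ : ι → ℝ} {p : ι → ι} {i₀ j : κ}

theorem apply_ne_self (hI : ThreeIndep (Sum.elim α β)) (hj : j ≠ i₀)
    (hrel : ∀ i, α i₀ - β i = ε i • α j + δ i • β (p i)) (i : ι) : p i ≠ i := by
  intro hpi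
  have hi := hrel i
  rw [hpi] at hi
  have h0 := LinearIndependent.triple_iff.mp (hI.inl_inl_inr hj.symm i) 1 (-ε i) (-(1 + δ i))
    (by linear_combination (norm := module) hi)
  exact one_ne_zero h0.1

theorem apply_apply_eq_self_of_delta_eq_one (hI : ThreeIndep (Sum.elim α β))
    (hrel : ∀ i, α i₀ - β i = ε i • α j + δ i • β (p i)) {i : ι} (hδ : δ i = 1) :
    p (p i) = i := by
  by_contra hpp
  have hi := hrel i
  rw [hδ, one_smul] at hi
  have h0 := LinearIndependent.triple_iff.mp (hI.inl_inr_inr j (Ne.symm hpp))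
    (ε i - ε (p i)) 1 (-δ (p i)) (by linear_combination (norm := module) hrel (p i) - hi)
  exact one_ne_zero h0.2.1

theorem eps_eq_and_delta_eq_one_of_delta_eq_one (hI : ThreeIndep (Sum.elim α β))
    (hj : j ≠ i₀) (hrel : ∀ i, α i₀ - β i = ε i • α j + δ i • β (p i)) {i : ι}
    (hδ : δ i = 1) : ε (p i) = ε i ∧ δ (p i) = 1 := by
  have hpi := hrel (p i)
  rw [apply_apply_eq_self_of_delta_eq_one hI hrel hδ] at hpi
  have hi := hrel i
  rw [hδ, one_smul] at hi
  have h0 := LinearIndependent.triple_iff.mp (hI.inl_inl_inr hj.symm i)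
    0 (ε i - ε (p i)) (1 - δ (p i)) (by linear_combination (norm := module) hpi - hi)
  constructor <;> linarith [h0.2.1, h0.2.2]

theorem delta_ne_neg_one (hI : ThreeIndep (Sum.elim α β)) (hj : j ≠ i₀)
    (hrel : ∀ i, α i₀ - β i = ε i • α j + δ i • β (p i)) (hε : ∀ i, ε i = 1 ∨ ε i = -1)
    (i : ι) : δ i ≠ -1 := by
  intro hδ
  have hpi_ne := apply_ne_self hI hj hrel i
  have hi := hrel i
  rw [hδ] at hi
  by_cases hpp : p (p i) = i
  · have hpi := hrel (p i)
    rw [hpp] at hpi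
    have h0 := LinearIndependent.triple_iff.mp (hI.inl_inr_inr j hpi_ne.symm)
      (ε i - ε (p i)) (1 - δ (p i)) (-2) (by linear_combination (norm := module) hpi - hi)
    norm_num at h0
  have hε_pm : ε (p i) = ε i ∨ ε (p i) = -ε i := by
    rcases hε i with h | h <;> rcases hε (p i) with h' | h' <;> norm_num [h, h']
  rcases hε_pm with heq | hneg
  · have hpi := hrel (p i)
    rw [heq] at hpi
    have h0 := LinearIndependent.triple_iff.mp
      (hI.inr_inr_inr hpi_ne.symm (Ne.symm hpp) (apply_ne_self hI hj hrel (p i)).symm)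
      1 (-2) (-δ (p i)) (by linear_combination (norm := module) hpi - hi)
    norm_num at h0
  · have hpi := hrel (p i)
    rw [hneg, neg_smul] at hpi
    have h0 := LinearIndependent.triple_iff.mp (hI.inl_inr_inr i₀ (Ne.symm hpp))
      2 (-1) (-δ (p i)) (by linear_combination (norm := module) hi + hpi)
    norm_num at h0

end TriangleConfig

theorem triangle_config_delta_eq_one_general
    {V : Type*} [AddCommGroup V] [Module ℝ V]
    (k : ℕ) (hk : 0 < k)
    (α β γ : Fin k → V)
    (ε δ : Fin k → Fin k → ℝ)
    (hε : ∀ i j, ε i j = 1 ∨ ε i j = -1)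
    (hδ : ∀ i j, δ i j = 1 ∨ δ i j = -1)
    (σ : Fin k → Equiv.Perm (Fin k))
    (hR1 : ∀ i, γ i = α ⟨0, hk⟩ - β i)
    (hR2 : ∀ i j, γ i = ε i j • α j + δ i j • β (σ j i))
    (hI1 : ThreeIndep (Sum.elim α β)) :
    ∀ i j : Fin k, j ≠ ⟨0, hk⟩ →
      δ i j = 1 ∧ ε (σ j i) j = ε i j ∧
      γ i = ε i j • α j + β (σ j i) ∧
      γ (σ j i) = ε i j • α j + β i := by
  intro i j hj
  have hrel : ∀ m, α ⟨0, hk⟩ - β m = ε m j • α j + δ m j • β (σ j m) :=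
    fun m => (hR1 m).symm.trans (hR2 m j)
  have hδ1 : δ i j = 1 :=
    (hδ i j).resolve_right (TriangleConfig.delta_ne_neg_one hI1 hj hrel (fun m => hε m j) i)
  obtain ⟨hε_σ, hδ_σ⟩ := TriangleConfig.eps_eq_and_delta_eq_one_of_delta_eq_one hI1 hj hrel hδ1
  have hσσ := TriangleConfig.apply_apply_eq_self_of_delta_eq_one hI1 hrel hδ1
  refine ⟨hδ1, hε_σ, ?_, ?_⟩
  · rw [hR2 i j, hδ1, one_smul]
  · rw [hR2 (σ j i) j, hσσ, hδ_σ, one_smul, hε_σ]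

/-- Sublemma: in the triangle configuration, for every `i` and every `j ≠ 1` one has
`δ_{ij} = 1` and `ε_{σ_j(i),j} = ε_{ij}`, i.e. `γ_i = ε_{ij}·α_j + β_{σ_j(i)}` and
`γ_{σ_j(i)} = ε_{ij}·α_j + β_i`. -/
theorem triangle_config_delta_eq_one
    {V : Type*} [AddCommGroup V] [Module ℝ V]
    (k : ℕ) (hk : 0 < k)
    (α β γ : Fin k → V)
    (ε δ : Fin k → Fin k → ℝ)
    (hε : ∀ i j, ε i j = 1 ∨ ε i j = -1)
    (hδ : ∀ i j, δ i j = 1 ∨ δ i j = -1)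
    (σ : Fin k → Equiv.Perm (Fin k))
    (hσ1 : σ ⟨0, hk⟩ = 1)
    (hR1 : ∀ i, γ i = α ⟨0, hk⟩ - β i)
    (hR2 : ∀ i j, γ i = ε i j • α j + δ i j • β (σ j i))
    (hI1 : ThreeIndep (Sum.elim α β))
    (hI2 : ThreeIndep (Sum.elim α γ))
    (hI3 : ThreeIndep (Sum.elim β γ)) :
    ∀ i j : Fin k, j ≠ ⟨0, hk⟩ →
      δ i j = 1 ∧ ε (σ j i) j = ε i j ∧
      γ i = ε i j • α j + β (σ j i) ∧
      γ (σ j i) = ε i j • α j + β i :=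
  triangle_config_delta_eq_one_general k hk α β γ ε δ hε hδ σ hR1 hR2 hI1
end

section
/- In the triangle configuration with k ≥ 3, for every i ∈ {1,…,k} and every j ∈ {1,…,k} with j ≠ 1 and j ≠ 2, one has ε_{σ_j(i),2} = −ε_{i,2}. -/
/-!
Write `(R)` as `α₁ - β_i = ε_{ij} α_j + δ_{ij} β_{σ_j(i)}`. Comparing the relations at `i` and
at `σ_j(i)` under `3`-independence of `(α, β)` shows that for `j ≠ 1` every `δ_{ij}` is `1`,
`σ_j` is an involution and `ε_{·j}` is constant on its orbits, so that
`β_i + β_{σ_j(i)} = α₁ - ε_{ij} α_j`.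

Now fix `j ∉ {1, 2}` and suppose `ε_{σ_j(i),2} = ε_{i,2}`. Then `T = σ_j ∘ σ_2` preserves this
property and the signs `ε_{·2}`, `ε_{·j}` along the orbit of `i`, and translates `β` by the fixed
vector `ε_{i2} α₂ - ε_{ij} α_j ≠ 0`: `β_{T^n(i)} = β_i + n (ε_{i2} α₂ - ε_{ij} α_j)`. Taking `n`
to be the order of the permutation `T` gives a contradiction.
-/

open Function

theorem ThreeIndep.coeffs_eq_zero {V I : Type*} [AddCommGroup V] [Module ℝ V] {w : I → V}
    (hw : ThreeIndep w) {x y z : I} (hxy : x ≠ y) (hxz : x ≠ z) (hyz : y ≠ z) {a b c : ℝ}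
    (h : a • w x + b • w y + c • w z = 0) : a = 0 ∧ b = 0 ∧ c = 0 := by
  have h3 := Fintype.linearIndependent_iff.mp (hw x y z hxy hxz hyz) ![a, b, c]
    (by simpa [Fin.sum_univ_three] using h)
  exact ⟨h3 0, h3 1, h3 2⟩

theorem eq_neg_of_ne_of_sign {x y : ℝ} (hx : x = 1 ∨ x = -1) (hy : y = 1 ∨ y = -1)
    (h : x ≠ y) : x = -y := by
  rcases hx with rfl | rfl <;> rcases hy with rfl | rfl <;> first | exact absurd rfl h | norm_num

section Relation

variable {V ι : Type*} [AddCommGroup V] [Module ℝ V] {α β : ι → V}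

theorem ThreeIndep.eq_zero_of_eq_add_smul (hI : ThreeIndep (Sum.elim α β)) {x y : ι}
    (hxy : x ≠ y) {a b : ι} {c : ℝ} (h : β a = β b + c • α x) : c = 0 := by
  by_cases hab : a = b
  · subst hab
    refine (hI.coeffs_eq_zero (x := .inl x) (y := .inl y) (z := .inr a) (by simpa using hxy)
      Sum.inl_ne_inr Sum.inl_ne_inr (b := 0) (c := 0) ?_).1
    simp only [Sum.elim_inl, Sum.elim_inr]
    linear_combination (norm := module) -h
  · have := (hI.coeffs_eq_zero (x := .inl x) (y := .inr a) (z := .inr b) Sum.inl_ne_inr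
      Sum.inl_ne_inr (by simpa using hab) (a := -c) (b := 1) (c := -1) (by
        simp only [Sum.elim_inl, Sum.elim_inr]
        linear_combination (norm := module) h)).1
    linarith

/-- Column `j ≠ i₀` of `(R)` once it is known that `τ = σ_j` pairs the indices and `δ_{·j} = 1`;
`s` stands for `ε_{·j}`. -/
structure IsPairingColumn (α β : ι → V) (i₀ j : ι) (s : ι → ℝ) (τ : Equiv.Perm ι) : Prop where
  involutive : Involutive τ
  sign_apply : ∀ i, s (τ i) = s i
  add_apply : ∀ i, β i + β (τ i) = α i₀ - s i • α j

variable {i₀ j : ι} {s d : ι → ℝ} {τ : Equiv.Perm ι}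

theorem apply_ne_self_of_relation (hI : ThreeIndep (Sum.elim α β)) (hj : j ≠ i₀)
    (hR : ∀ i, α i₀ - β i = s i • α j + d i • β (τ i)) (i : ι) : τ i ≠ i := by
  intro hfix
  have h := hR i
  rw [hfix] at h
  refine one_ne_zero (hI.coeffs_eq_zero (x := .inl i₀) (y := .inl j) (z := .inr i)
    (by simpa using hj.symm) Sum.inl_ne_inr Sum.inl_ne_inr (b := -s i) (c := -(1 + d i)) ?_).1
  simp only [Sum.elim_inl, Sum.elim_inr]
  linear_combination (norm := module) h

theorem apply_apply_of_relation (hs : ∀ i, s i = 1 ∨ s i = -1) (hd : ∀ i, d i = 1 ∨ d i = -1)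
    (hI : ThreeIndep (Sum.elim α β)) (hj : j ≠ i₀)
    (hR : ∀ i, α i₀ - β i = s i • α j + d i • β (τ i)) (i : ι) : τ (τ i) = i := by
  by_contra ht
  have hti : τ i ≠ i := apply_ne_self_of_relation hI hj hR i
  have htt : τ (τ i) ≠ τ i := apply_ne_self_of_relation hI hj hR (τ i)
  have E₁ := hR i
  have E₂ := hR (τ i)
  -- In each case the `β i`-coefficient of a relation among three distinct vectors is `1`.
  rcases hd i with hdi | hdi
  · rw [hdi] at E₁
    refine one_ne_zero (hI.coeffs_eq_zero (x := .inr i) (y := .inr (τ (τ i))) (z := .inl j)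
      (by simpa using Ne.symm ht) Sum.inr_ne_inl Sum.inr_ne_inl
      (b := -d (τ i)) (c := s i - s (τ i)) ?_).1
    simp only [Sum.elim_inl, Sum.elim_inr]
    linear_combination (norm := module) E₂ - E₁
  by_cases hss : s (τ i) = s i
  · rw [hdi, ← hss] at E₁
    refine one_ne_zero (hI.coeffs_eq_zero (x := .inr i) (y := .inr (τ i)) (z := .inr (τ (τ i)))
      (by simpa using hti.symm) (by simpa using Ne.symm ht) (by simpa using htt.symm)
      (b := -2) (c := -d (τ i)) ?_).1
    simp only [Sum.elim_inr]
    linear_combination (norm := module) E₂ - E₁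
  · rw [hdi] at E₁
    rw [eq_neg_of_ne_of_sign (hs _) (hs _) hss] at E₂
    refine one_ne_zero (hI.coeffs_eq_zero (x := .inr i) (y := .inr (τ (τ i))) (z := .inl i₀)
      (by simpa using Ne.symm ht) Sum.inr_ne_inl Sum.inr_ne_inl
      (b := d (τ i)) (c := -2) ?_).1
    simp only [Sum.elim_inl, Sum.elim_inr]
    linear_combination (norm := module) -E₂ - E₁

theorem isPairingColumn_of_relation (hs : ∀ i, s i = 1 ∨ s i = -1)
    (hd : ∀ i, d i = 1 ∨ d i = -1) (hI : ThreeIndep (Sum.elim α β)) (hj : j ≠ i₀)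
    (hR : ∀ i, α i₀ - β i = s i • α j + d i • β (τ i)) : IsPairingColumn α β i₀ j s τ := by
  have hinv : Involutive τ := apply_apply_of_relation hs hd hI hj hR
  have hcoeffs : ∀ i, d i = 1 ∧ s (τ i) = s i := by
    intro i
    have E₁ := hR i
    have E₂ := hR (τ i)
    rw [hinv i] at E₂
    obtain ⟨-, hdi, hsi⟩ := hI.coeffs_eq_zero (x := .inr i) (y := .inr (τ i)) (z := .inl j)
      (by simpa using (apply_ne_self_of_relation hI hj hR i).symm) Sum.inr_ne_inl
      Sum.inr_ne_inl (a := 1 - d (τ i)) (b := d i - 1) (c := s i - s (τ i)) (by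
        simp only [Sum.elim_inl, Sum.elim_inr]
        linear_combination (norm := module) E₂ - E₁)
    exact ⟨by linarith, by linarith⟩
  refine ⟨hinv, fun i => (hcoeffs i).2, fun i => ?_⟩
  have E := hR i
  rw [(hcoeffs i).1, one_smul] at E
  linear_combination (norm := module) -E

end Relation

namespace IsPairingColumn

variable {V ι : Type*} [AddCommGroup V] [Module ℝ V] {α β : ι → V} {i₀ j l : ι}
  {sj sl : ι → ℝ} {τj τl : Equiv.Perm ι}

theorem apply_apply_swap (hj : IsPairingColumn α β i₀ j sj τj)
    (hl : IsPairingColumn α β i₀ l sl τl) (m : ι) :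
    β (τl (τj m)) = β m - sl (τj m) • α l + sj m • α j := by
  linear_combination (norm := module) hl.add_apply (τj m) - hj.add_apply m

theorem sign_apply_eq_of_sign_apply_eq (hI : ThreeIndep (Sum.elim α β))
    (hj : IsPairingColumn α β i₀ j sj τj) (hl : IsPairingColumn α β i₀ l sl τl)
    (hsj : ∀ i, sj i = 1 ∨ sj i = -1) (hsl : ∀ i, sl i = 1 ∨ sl i = -1) (hl0 : l ≠ i₀)
    {m : ι} (h : sl (τj m) = sl m) : sj (τl m) = sj m := by
  by_contra hne
  have hjl := hl.apply_apply_swap hj m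
  rw [eq_neg_of_ne_of_sign (hsj _) (hsj _) hne] at hjl
  have hlj := hj.apply_apply_swap hl m
  rw [h] at hlj
  have h2 : 2 * sl m = 0 := hI.eq_zero_of_eq_add_smul hl0 (a := τj (τl m)) (b := τl (τj m)) (by
    linear_combination (norm := module) hjl - hlj)
  rcases hsl m with h1 | h1 <;> rw [h1] at h2 <;> norm_num at h2

theorem mul_apply_of_sign_apply_eq (hI : ThreeIndep (Sum.elim α β))
    (hj : IsPairingColumn α β i₀ j sj τj) (hl : IsPairingColumn α β i₀ l sl τl)
    (hsj : ∀ i, sj i = 1 ∨ sj i = -1) (hsl : ∀ i, sl i = 1 ∨ sl i = -1)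
    (hj0 : j ≠ i₀) (hl0 : l ≠ i₀) {m : ι} (h : sl (τj m) = sl m) :
    sl (τj ((τj * τl) m)) = sl ((τj * τl) m) ∧ sl ((τj * τl) m) = sl m ∧
      sj ((τj * τl) m) = sj m ∧ β ((τj * τl) m) = β m + (sl m • α l - sj m • α j) := by
  have hjm : sj (τl m) = sj m := sign_apply_eq_of_sign_apply_eq hI hj hl hsj hsl hl0 h
  have hlm : sl (τj (τl m)) = sl (τl m) :=
    sign_apply_eq_of_sign_apply_eq hI hl hj hsl hsj hj0 (by rw [hl.involutive m, hjm])
  rw [Equiv.Perm.mul_apply, hj.involutive]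
  refine ⟨hlm.symm, hlm.trans (hl.sign_apply m), (hj.sign_apply _).trans hjm, ?_⟩
  rw [hl.apply_apply_swap hj m, hjm]
  abel

theorem mul_pow_smul_of_sign_apply_eq (hI : ThreeIndep (Sum.elim α β))
    (hj : IsPairingColumn α β i₀ j sj τj) (hl : IsPairingColumn α β i₀ l sl τl)
    (hsj : ∀ i, sj i = 1 ∨ sj i = -1) (hsl : ∀ i, sl i = 1 ∨ sl i = -1)
    (hj0 : j ≠ i₀) (hl0 : l ≠ i₀) {m : ι} (h : sl (τj m) = sl m) (n : ℕ) :
    sl (τj ((τj * τl) ^ n • m)) = sl ((τj * τl) ^ n • m) ∧ sl ((τj * τl) ^ n • m) = sl m ∧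
      sj ((τj * τl) ^ n • m) = sj m ∧
      β ((τj * τl) ^ n • m) = β m + (n : ℝ) • (sl m • α l - sj m • α j) := by
  induction n with
  | zero => simpa using h
  | succ n ih =>
    obtain ⟨hQ, hl', hj', hβ⟩ := ih
    obtain ⟨hQ₁, hl₁, hj₁, hβ₁⟩ := mul_apply_of_sign_apply_eq hI hj hl hsj hsl hj0 hl0 hQ
    rw [pow_succ', mul_smul, Equiv.Perm.smul_def]
    refine ⟨hQ₁, hl₁.trans hl', hj₁.trans hj', ?_⟩
    rw [hβ₁, hβ, hl', hj']
    push_cast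
    module

theorem sign_apply_eq_neg [Finite ι] (hI : ThreeIndep (Sum.elim α β))
    (hj : IsPairingColumn α β i₀ j sj τj) (hl : IsPairingColumn α β i₀ l sl τl)
    (hsj : ∀ i, sj i = 1 ∨ sj i = -1) (hsl : ∀ i, sl i = 1 ∨ sl i = -1)
    (hjl : j ≠ l) (hj0 : j ≠ i₀) (hl0 : l ≠ i₀) (m : ι) : sl (τj m) = -sl m := by
  refine eq_neg_of_ne_of_sign (hsl _) (hsl _) fun h => ?_
  set n := orderOf (τj * τl)
  have hβ := (mul_pow_smul_of_sign_apply_eq hI hj hl hsj hsl hj0 hl0 h n).2.2.2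
  rw [pow_orderOf_eq_one, one_smul] at hβ
  have hn : (n : ℝ) * sl m = 0 := (hI.coeffs_eq_zero (x := .inl l) (y := .inl j) (z := .inl i₀)
    (by simpa using hjl.symm) (by simpa using hl0) (by simpa using hj0)
    (b := -(n * sj m)) (c := 0) (by
      simp only [Sum.elim_inl]
      linear_combination (norm := module) -hβ)).1
  have hn0 : (n : ℝ) ≠ 0 := Nat.cast_ne_zero.mpr (orderOf_pos _).ne'
  rcases hsl m with h1 | h1 <;> rw [h1] at hn <;> simp [hn0] at hn

end IsPairingColumn

/-- Sublemma: in the triangle configuration with `k ≥ 3`, for every `i` and every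
`j` with `j ≠ 1` and `j ≠ 2` one has `ε_{σ_j(i),2} = −ε_{i,2}`. -/
theorem triangle_config_epsilon_sign_flip
    {V : Type*} [AddCommGroup V] [Module ℝ V]
    (k : ℕ) (hk : 3 ≤ k)
    (α β γ : Fin k → V)
    (ε δ : Fin k → Fin k → ℝ)
    (hε : ∀ i j, ε i j = 1 ∨ ε i j = -1)
    (hδ : ∀ i j, δ i j = 1 ∨ δ i j = -1)
    (σ : Fin k → Equiv.Perm (Fin k))
    (hR1 : ∀ i, γ i = α ⟨0, by omega⟩ - β i)
    (hR2 : ∀ i j, γ i = ε i j • α j + δ i j • β (σ j i))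
    (hI1 : ThreeIndep (Sum.elim α β)) :
    ∀ i j : Fin k, j ≠ ⟨0, by omega⟩ → j ≠ ⟨1, by omega⟩ →
      ε (σ j i) ⟨1, by omega⟩ = - ε i ⟨1, by omega⟩ := by
  intro i j hj0 hj1
  have pairing : ∀ c : Fin k, c ≠ ⟨0, by omega⟩ →
      IsPairingColumn α β ⟨0, by omega⟩ c (ε · c) (σ c) := fun c hc =>
    isPairingColumn_of_relation (hε · c) (hδ · c) hI1 hc fun i => (hR1 i).symm.trans (hR2 i c)
  have h10 : (⟨1, by omega⟩ : Fin k) ≠ ⟨0, by omega⟩ := Fin.ne_of_val_ne one_ne_zero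
  exact (pairing j hj0).sign_apply_eq_neg hI1 (pairing _ h10) (hε · j) (hε · _) hj1 hj0 h10 i
end

section
/- Let n ≥ 3 and let g_{ij} = g_{ji} ∈ V be vectors indexed by unordered pairs of distinct elements i,j ∈ {0,1,…,n}, such that: (i) for each vertex i, the family (g_{ij})_{j≠i} is 3-independent; and (ii) for all pairwise distinct i, j, l ∈ {0,1,…,n} there exist signs a, b ∈ {1,−1} with g_{jl} = a·g_{ij} + b·g_{il}. Then there exist vectors α_0,…,α_n ∈ V such that for all i ≠ j, either g_{ij} = α_i − α_j or g_{ij} = α_j − α_i. -/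
def IsSign (c : ℝ) : Prop := c = 1 ∨ c = -1

lemma IsSign.mul {a b : ℝ} (ha : IsSign a) (hb : IsSign b) : IsSign (a * b) := by
  rcases ha with rfl | rfl <;> rcases hb with rfl | rfl <;> norm_num [IsSign]

lemma IsSign.neg {a : ℝ} (ha : IsSign a) : IsSign (-a) := by
  rcases ha with rfl | rfl <;> norm_num [IsSign]

section

variable {V : Type*} [AddCommGroup V] [Module ℝ V]

lemma smul_add_smul_eq_smul_sub {a b : ℝ} (ha : IsSign a) (u v : V) :
    a • u + b • v = a • (u - (-(a * b)) • v) := by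
  rcases ha with rfl | rfl <;> module

lemma eq_sub_or_eq_sub_of_eq_smul {c : ℝ} (hc : IsSign c) {x y z : V}
    (h : x = c • (y - z)) : x = y - z ∨ x = z - y := by
  rcases hc with rfl | rfl
  · exact Or.inl (by simpa using h)
  · exact Or.inr (by rw [h]; module)

lemma LinearIndependent.eq_zero_of_smul_add_smul_add_smul {u v w : V}
    (h : LinearIndependent ℝ ![u, v, w]) {a b c : ℝ} (habc : a • u + b • v + c • w = 0) :
    a = 0 := by
  have := Fintype.linearIndependent_iff.mp h ![a, b, c] (by simpa [Fin.sum_univ_three] using habc)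
  simpa using this 0

lemma LinearIndependent.eq_sub_or_eq_sub_of_two_expansions {u v w αv αw e : V}
    (h : LinearIndependent ℝ ![u, v, w]) {s t a b x y : ℝ} (hαv : αv = s • v) (hαw : αw = t • w)
    (hx : IsSign x) (hvw : e = a • v + b • w) (hu : e = x • (u - αv) + y • (u - αw)) :
    e = αv - αw ∨ e = αw - αv := by
  subst hαv hαw
  have hxy : x + y = 0 := h.eq_zero_of_smul_add_smul_add_smul (b := -(x * s) - a)
    (c := -(y * t) - b) (by linear_combination (norm := module) hu.symm.trans hvw)
  refine eq_sub_or_eq_sub_of_eq_smul hx.neg ?_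
  rw [hu, eq_neg_of_add_eq_zero_right hxy]
  module

variable {ι : Type*} {g : ι → ι → V}

lemma ThreeIndep.linearIndependent {o : ι} (h : ThreeIndep (fun j : {j : ι // j ≠ o} => g o j.1))
    {i j k : ι} (hi : i ≠ o) (hj : j ≠ o) (hk : k ≠ o) (hij : i ≠ j) (hik : i ≠ k) (hjk : j ≠ k) :
    LinearIndependent ℝ ![g o i, g o j, g o k] :=
  h ⟨i, hi⟩ ⟨j, hj⟩ ⟨k, hk⟩ (Subtype.coe_ne_coe.mp hij) (Subtype.coe_ne_coe.mp hik)
    (Subtype.coe_ne_coe.mp hjk)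

theorem exists_weights_adapted_to_edge
    (hface : ∀ i j l : ι, i ≠ j → i ≠ l → j ≠ l →
      ∃ a b : ℝ, IsSign a ∧ IsSign b ∧ g j l = a • g i j + b • g i l)
    {o p : ι} (hop : o ≠ p) :
    ∃ α : ι → V, α o = 0 ∧ α p = g o p ∧
      (∀ j, j ≠ o → ∃ s : ℝ, IsSign s ∧ α j = s • g o j) ∧
      ∀ j, j ≠ o → j ≠ p → ∃ c : ℝ, IsSign c ∧ g p j = c • (α p - α j) := by
  classical
  have hsign : ∀ j, ∃ s : ℝ, IsSign s ∧ (j ≠ o → j ≠ p →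
      ∃ c : ℝ, IsSign c ∧ g p j = c • (g o p - s • g o j)) := by
    intro j
    by_cases hj : j ≠ o ∧ j ≠ p
    · obtain ⟨a, b, ha, hb, h⟩ := hface o p j hop hj.1.symm hj.2.symm
      exact ⟨-(a * b), (ha.mul hb).neg,
        fun _ _ => ⟨a, ha, h.trans (smul_add_smul_eq_smul_sub ha _ _)⟩⟩
    · exact ⟨1, Or.inl rfl, fun hjo hjp => absurd ⟨hjo, hjp⟩ hj⟩
  choose s hs_sign hs using hsign
  refine ⟨fun j => if j = o then 0 else if j = p then g o p else s j • g o j,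
    by simp, by simp [hop.symm], fun j hjo => ?_, fun j hjo hjp => ?_⟩
  · by_cases hjp : j = p
    · exact ⟨1, Or.inl rfl, by simp [hjp, hop.symm]⟩
    · exact ⟨s j, hs_sign j, by simp [hjo, hjp]⟩
  · simpa [hjo, hjp, hop.symm] using hs j hjo hjp

theorem exists_weights_of_ne (hsym : ∀ i j, g i j = g j i)
    (h3 : ∀ i : ι, ThreeIndep (fun j : {j : ι // j ≠ i} => g i j.1))
    (hface : ∀ i j l : ι, i ≠ j → i ≠ l → j ≠ l →
      ∃ a b : ℝ, IsSign a ∧ IsSign b ∧ g j l = a • g i j + b • g i l)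
    {o p : ι} (hop : o ≠ p) :
    ∃ α : ι → V, ∀ i j, i ≠ j → g i j = α i - α j ∨ g i j = α j - α i := by
  obtain ⟨α, hαo, hαp, hαg, hgp⟩ := exists_weights_adapted_to_edge hface hop
  refine ⟨α, ?_⟩
  have off_edge : ∀ i j, i ≠ j → j ≠ o → j ≠ p → g i j = α i - α j ∨ g i j = α j - α i := by
    intro i j hij hjo hjp
    obtain ⟨t, ht, hαj⟩ := hαg j hjo
    by_cases hio : i = o
    · subst hio
      refine eq_sub_or_eq_sub_of_eq_smul ht.neg ?_
      rw [hαo, hαj]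
      rcases ht with rfl | rfl <;> module
    by_cases hip : i = p
    · subst hip
      obtain ⟨c, hc, h⟩ := hgp j hjo hjp
      exact eq_sub_or_eq_sub_of_eq_smul hc h
    obtain ⟨s, -, hαi⟩ := hαg i hio
    obtain ⟨c, hc, hpi⟩ := hgp i hio hip
    obtain ⟨d, -, hpj⟩ := hgp j hjo hjp
    obtain ⟨a, b, -, -, hij_o⟩ := hface o i j (Ne.symm hio) (Ne.symm hjo) hij
    obtain ⟨x, y, hx, -, hij_p⟩ := hface p i j (Ne.symm hip) (Ne.symm hjp) hij
    refine ((h3 o).linearIndependent hop.symm hio hjo (Ne.symm hip) (Ne.symm hjp) hij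
      ).eq_sub_or_eq_sub_of_two_expansions hαi hαj (hx.mul hc) (y := y * d) hij_o ?_
    rw [hij_p, hpi, hpj, smul_smul, smul_smul, hαp]
  intro i j hij
  by_cases hj : j ≠ o ∧ j ≠ p
  · exact off_edge i j hij hj.1 hj.2
  by_cases hi : i ≠ o ∧ i ≠ p
  · rw [hsym]
    exact (off_edge j i hij.symm hi.1 hi.2).symm
  have hi : i = o ∨ i = p := by tauto
  have hj : j = o ∨ j = p := by tauto
  rcases hi with rfl | rfl <;> rcases hj with rfl | rfl
  · exact absurd rfl hij
  · exact Or.inr (by simp [hαo, hαp])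
  · exact Or.inl (by simp [hsym i j, hαo, hαp])
  · exact absurd rfl hij

end

theorem complete_graph_labeling_standard_general
    {V : Type*} [AddCommGroup V] [Module ℝ V]
    (n : ℕ)
    (g : Fin (n + 1) → Fin (n + 1) → V)
    (hsym : ∀ i j, g i j = g j i)
    (h3 : ∀ i : Fin (n + 1), ThreeIndep (fun j : {j : Fin (n + 1) // j ≠ i} => g i j.1))
    (hface : ∀ i j l : Fin (n + 1), i ≠ j → i ≠ l → j ≠ l →
      ∃ a b : ℝ, (a = 1 ∨ a = -1) ∧ (b = 1 ∨ b = -1) ∧ g j l = a • g i j + b • g i l) :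
    ∃ α : Fin (n + 1) → V, ∀ i j, i ≠ j → g i j = α i - α j ∨ g i j = α j - α i := by
  rcases subsingleton_or_nontrivial (Fin (n + 1)) with _ | _
  · exact ⟨0, fun i j hij => absurd (Subsingleton.elim i j) hij⟩
  · obtain ⟨o, p, hop⟩ := exists_pair_ne (Fin (n + 1))
    exact exists_weights_of_ne hsym h3 hface hop

/-- A 3-independent labeling `g` of the complete graph on `{0, 1, …, n}` (`n ≥ 3`)
whose triangles satisfy `g_{jl} = ±g_{ij} ± g_{il}` coincides with the labeling of a
linear torus action on `ℂP^n`: there are vectors `α_0, …, α_n` with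
`g_{ij} = ±(α_i − α_j)`. -/
theorem complete_graph_labeling_standard
    {V : Type*} [AddCommGroup V] [Module ℝ V]
    (n : ℕ) (hn : 3 ≤ n)
    (g : Fin (n + 1) → Fin (n + 1) → V)
    (hsym : ∀ i j, g i j = g j i)
    (h3 : ∀ i : Fin (n + 1), ThreeIndep (fun j : {j : Fin (n + 1) // j ≠ i} => g i j.1))
    (hface : ∀ i j l : Fin (n + 1), i ≠ j → i ≠ l → j ≠ l →
      ∃ a b : ℝ, (a = 1 ∨ a = -1) ∧ (b = 1 ∨ b = -1) ∧ g j l = a • g i j + b • g i l) :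
    ∃ α : Fin (n + 1) → V, ∀ i j, i ≠ j → g i j = α i - α j ∨ g i j = α j - α i :=
  complete_graph_labeling_standard_general n g hsym h3 hface
end

section
/- Let α and β be linearly independent vectors in a real vector space V, let k ≥ 1, let s, ε_1,…,ε_k, δ_1,…,δ_k ∈ {1,−1}, let γ_1,…,γ_k ∈ V, and let σ' and σ'' be permutations of {1,…,k} such that for every i ∈ {1,…,k}: s·α + β = (ε_i·α + γ_{σ'(i)}) − (δ_i·β + γ_{σ''(i)}). Then δ_i = −1 and ε_i = s for all i ∈ {1,…,k}. -/
/-!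
Summing the relations over `i`, the `γ`-terms cancel because `σ'` and `σ''` are permutations, so
`(∑ (s - ε i)) • α + (∑ (1 + δ i)) • β = 0`. Linear independence makes both coefficients vanish,
and a sum of differences of signs `c - x i` vanishes only if every `x i` equals `c`.
-/

open Finset

theorem Equiv.Perm.sum_comp_sub_sum_comp {ι M : Type*} [Fintype ι] [AddCommGroup M]
    (σ τ : Equiv.Perm ι) (γ : ι → M) : ∑ i, (γ (σ i) - γ (τ i)) = 0 := by
  rw [sum_sub_distrib, Equiv.sum_comp σ γ, Equiv.sum_comp τ γ, sub_self]

/-- Multiplying by the sign `c` makes every summand `1 - c * x i` nonnegative. -/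
theorem forall_eq_of_sum_sub_eq_zero_of_signs {ι R : Type*} [Fintype ι]
    [Ring R] [LinearOrder R] [IsStrictOrderedRing R] {c : R} {x : ι → R}
    (hc : c = 1 ∨ c = -1) (hx : ∀ i, x i = 1 ∨ x i = -1) (hsum : ∑ i, (c - x i) = 0) :
    ∀ i, x i = c := by
  have hnonneg : ∀ i ∈ univ, 0 ≤ c * (c - x i) := by
    intro i _
    rcases hc with rfl | rfl <;> rcases hx i with hi | hi <;> rw [hi] <;> norm_num
  have hzero := (sum_eq_zero_iff_of_nonneg hnonneg).mp (by rw [← mul_sum, hsum, mul_zero])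
  have hc0 : c ≠ 0 := by rcases hc with rfl | rfl <;> norm_num
  intro i
  have := (mul_eq_zero.mp (hzero i (mem_univ i))).resolve_left hc0
  exact (sub_eq_zero.mp this).symm

theorem telescoping_sign_identity_general
    {V : Type*} [AddCommGroup V] [Module ℝ V]
    (α β : V) (hind : LinearIndependent ℝ ![α, β])
    (k : ℕ)
    (s : ℝ) (hs : s = 1 ∨ s = -1)
    (ε δ : Fin k → ℝ)
    (hε : ∀ i, ε i = 1 ∨ ε i = -1) (hδ : ∀ i, δ i = 1 ∨ δ i = -1)
    (γ : Fin k → V)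
    (σ' σ'' : Equiv.Perm (Fin k))
    (h : ∀ i, s • α + β = (ε i • α + γ (σ' i)) - (δ i • β + γ (σ'' i))) :
    ∀ i, δ i = -1 ∧ ε i = s := by
  have hsum : (∑ i, (s - ε i)) • α + (∑ i, (1 + δ i)) • β = 0 := by
    rw [sum_smul, sum_smul, ← sum_add_distrib, ← σ'.sum_comp_sub_sum_comp σ'' γ]
    refine sum_congr rfl fun i _ => ?_
    linear_combination (norm := module) h i
  obtain ⟨hsε, hsδ⟩ := LinearIndependent.pair_iff.mp hind _ _ hsum
  have hsδ' : ∑ i, (-1 - δ i) = 0 := by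
    rw [← neg_eq_zero, ← sum_neg_distrib, ← hsδ]
    simp only [neg_sub, sub_neg_eq_add, add_comm]
  intro i
  exact ⟨forall_eq_of_sum_sub_eq_zero_of_signs (Or.inr rfl) hδ hsδ' i,
    forall_eq_of_sum_sub_eq_zero_of_signs hs hε hsε i⟩

/-- Telescoping identity: if `α, β` are linearly independent and for every
`i ∈ {1, …, k}` one has `s·α + β = (ε_i·α + γ_{σ'(i)}) − (δ_i·β + γ_{σ''(i)})`
with signs `s, ε_i, δ_i` and permutations `σ', σ''`, then `δ_i = −1` and `ε_i = s`
for all `i`. -/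
theorem telescoping_sign_identity
    {V : Type*} [AddCommGroup V] [Module ℝ V]
    (α β : V) (hind : LinearIndependent ℝ ![α, β])
    (k : ℕ) (hk : 0 < k)
    (s : ℝ) (hs : s = 1 ∨ s = -1)
    (ε δ : Fin k → ℝ)
    (hε : ∀ i, ε i = 1 ∨ ε i = -1) (hδ : ∀ i, δ i = 1 ∨ δ i = -1)
    (γ : Fin k → V)
    (σ' σ'' : Equiv.Perm (Fin k))
    (h : ∀ i, s • α + β = (ε i • α + γ (σ' i)) - (δ i • β + γ (σ'' i))) :
    ∀ i, δ i = -1 ∧ ε i = s :=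
  telescoping_sign_identity_general α β hind k s hs ε δ hε hδ γ σ' σ'' h
end

section
/- Let V be a real vector space, let α_1,…,α_4, β_1, γ_1,…,γ_4 ∈ V, and let c_1,…,c_4 ∈ {1,−1}. Assume: (i) the family (α_1,…,α_4, β_1, γ_1,…,γ_4) is 3-independent; (ii) the family (γ_1,…,γ_4, α_1−γ_1,…,α_1−γ_4, β_1+c_1·γ_1,…,β_1+c_4·γ_4) is 3-independent; (iii) for all distinct i,j ∈ {1,…,4} there exist k ∈ {1,…,4} and s ∈ {1,−1} with α_1 − γ_i = s·α_k + γ_j. If for some j, i ∈ {1,…,4} and a, b ∈ {1,−1} one has α_1 − β_1 = a·(α_1 − γ_i) + b·(β_1 + c_j·γ_j), then i = j, a = 1, b = −1 and c_j = −1. -/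
section

variable {V : Type*} [AddCommGroup V] [Module ℝ V]

theorem LinearIndependent.eq_zero_of_smul_add_smul_add_smul_eq_zero {u v w : V}
    (h : LinearIndependent ℝ ![u, v, w]) {x y z : ℝ} (hxyz : x • u + y • v + z • w = 0) :
    x = 0 ∧ y = 0 ∧ z = 0 := by
  have h0 := Fintype.linearIndependent_iff.mp h ![x, y, z]
    (by simpa [Fin.sum_univ_three] using hxyz)
  exact ⟨h0 0, h0 1, h0 2⟩

theorem LinearIndependent.eq_of_sub_eq_smul_sub_add_smul_add_smul {u v w : V}
    (h : LinearIndependent ℝ ![u, v, w]) {a b c : ℝ}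
    (heq : u - v = a • (u - w) + b • (v + c • w)) : a = 1 ∧ b = -1 ∧ c = -1 := by
  obtain ⟨hu, hv, hw⟩ := h.eq_zero_of_smul_add_smul_add_smul_eq_zero
    (x := 1 - a) (y := -1 - b) (z := a - b * c) (by linear_combination (norm := module) heq)
  obtain rfl : a = 1 := by linarith
  obtain rfl : b = -1 := by linarith
  exact ⟨rfl, rfl, by linarith⟩

variable {α γ : Fin 4 → V} {β1 : V}

theorem add_ne_two_smul_sub_of_sub_eq_smul_add
    (hI1 : ThreeIndep (Sum.elim (Sum.elim α γ) (fun _ : Unit => β1)))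
    {i j m : Fin 4} {s : ℝ} (hm : α 0 - γ i = s • α m + γ j) :
    γ i + γ j ≠ (2 : ℝ) • (α 0 - β1) := by
  intro h
  rcases eq_or_ne m 0 with rfl | hm0
  · have hind : LinearIndependent ℝ ![α 0, β1, γ j] := by
      simpa using hI1 (.inl (.inl 0)) (.inr ()) (.inl (.inr j)) (by simp) (by simp) (by simp)
    have := hind.eq_zero_of_smul_add_smul_add_smul_eq_zero (x := 1 + s) (y := -2) (z := 0)
      (by linear_combination (norm := module) -h - hm)
    norm_num at this
  · have hind : LinearIndependent ℝ ![α 0, α m, β1] := by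
      simpa using hI1 (.inl (.inl 0)) (.inl (.inl m)) (.inr ())
        (by simp [Ne.symm hm0]) (by simp) (by simp)
    have := hind.eq_zero_of_smul_add_smul_add_smul_eq_zero (x := 1) (y := s) (z := -2)
      (by linear_combination (norm := module) -h - hm)
    norm_num at this

theorem sub_ne_smul_sub_add_smul_add_smul_of_ne {c : Fin 4 → ℝ}
    (hI1 : ThreeIndep (Sum.elim (Sum.elim α γ) (fun _ : Unit => β1)))
    (hI2 : ThreeIndep (Sum.elim (Sum.elim γ (fun i : Fin 4 => α 0 - γ i))
      (fun i : Fin 4 => β1 + c i • γ i)))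
    {i j m : Fin 4} (hij : i ≠ j) {s : ℝ} (hm : α 0 - γ i = s • α m + γ j)
    (hcj : c j = 1 ∨ c j = -1) {a b : ℝ} (ha : a = 1 ∨ a = -1) (hb : b = 1 ∨ b = -1) :
    α 0 - β1 ≠ a • (α 0 - γ i) + b • (β1 + c j • γ j) := by
  intro heq
  rcases ha with rfl | rfl
  · have hind : LinearIndependent ℝ ![β1, γ i, γ j] := by
      simpa using hI1 (.inr ()) (.inl (.inr i)) (.inl (.inr j))
        (by simp) (by simp) (by simp [hij])
    have := hind.eq_zero_of_smul_add_smul_add_smul_eq_zero (x := -1 - b) (y := 1) (z := -b * c j)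
      (by linear_combination (norm := module) heq)
    norm_num at this
  rcases hb with rfl | rfl
  · rcases hcj with hcj | hcj
    · rw [hcj] at heq
      exact add_ne_two_smul_sub_of_sub_eq_smul_add hI1 hm
        (by linear_combination (norm := module) -heq)
    · have hind : LinearIndependent ℝ ![α 0 - γ i, α 0 - γ j, β1 + c j • γ j] := by
        simpa using hI2 (.inl (.inr i)) (.inl (.inr j)) (.inr j)
          (by simp [hij]) (by simp) (by simp)
      rw [hcj] at hind heq
      have := hind.eq_zero_of_smul_add_smul_add_smul_eq_zero (x := 1) (y := 1) (z := -2)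
        (by linear_combination (norm := module) heq)
      norm_num at this
  · have hind : LinearIndependent ℝ ![α 0, γ i, γ j] := by
      simpa using hI1 (.inl (.inl 0)) (.inl (.inr i)) (.inl (.inr j))
        (by simp) (by simp) (by simp [hij])
    have := hind.eq_zero_of_smul_add_smul_add_smul_eq_zero (x := 2) (y := -1) (z := c j)
      (by linear_combination (norm := module) heq)
    norm_num at this

end

/-- Ruling out the quadrupled tetrahedron: with `α_1, …, α_4, β_1, γ_1, …, γ_4` and
signs `c_1, …, c_4` as in the configuration (3-independence at `v_0` and at `v_3`,
and the triangle relations), the relation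
`α_1 − β_1 = a·(α_1 − γ_i) + b·(β_1 + c_j·γ_j)` forces `i = j`, `a = 1`, `b = −1`
and `c_j = −1`.  (Here `α 0` plays the role of `α_1` and `β1` that of `β_1`.) -/
theorem tetrahedron_sign_determination
    {V : Type*} [AddCommGroup V] [Module ℝ V]
    (α γ : Fin 4 → V) (β1 : V)
    (c : Fin 4 → ℝ) (hc : ∀ i, c i = 1 ∨ c i = -1)
    (hI1 : ThreeIndep (Sum.elim (Sum.elim α γ) (fun _ : Unit => β1)))
    (hI2 : ThreeIndep (Sum.elim (Sum.elim γ (fun i : Fin 4 => α 0 - γ i))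
      (fun i : Fin 4 => β1 + c i • γ i)))
    (hface : ∀ i j : Fin 4, i ≠ j → ∃ (m : Fin 4) (s : ℝ), (s = 1 ∨ s = -1) ∧
      α 0 - γ i = s • α m + γ j)
    (i j : Fin 4) (a b : ℝ) (ha : a = 1 ∨ a = -1) (hb : b = 1 ∨ b = -1)
    (heq : α 0 - β1 = a • (α 0 - γ i) + b • (β1 + c j • γ j)) :
    i = j ∧ a = 1 ∧ b = -1 ∧ c j = -1 := by
  rcases eq_or_ne i j with rfl | hij
  · have hind : LinearIndependent ℝ ![α 0, β1, γ i] := by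
      simpa using hI1 (.inl (.inl 0)) (.inr ()) (.inl (.inr i)) (by simp) (by simp) (by simp)
    exact ⟨rfl, hind.eq_of_sub_eq_smul_sub_add_smul_add_smul heq⟩
  · obtain ⟨m, s, -, hm⟩ := hface i j hij
    exact absurd heq (sub_ne_smul_sub_add_smul_add_smul_of_ne hI1 hI2 hij hm (hc j) ha hb)
end

section
/- Let n ≥ 2 and let γ_1,…,γ_n, γ'_1,…,γ'_n ∈ V be such that the combined family of these 2n vectors is 3-independent and γ_i + γ'_i = γ_j + γ'_j for all i,j ∈ {1,…,n}. Suppose that for all distinct i,j ∈ {1,…,n} there are vectors g_{ij}, g'_{ij} ∈ V and signs η_{ij}, η'_{ij}, a_{ij}, b_{ij}, c_{ij}, d_{ij} ∈ {1,−1} with g_{ij} = γ_j + η_{ij}·γ'_i = a_{ij}·γ'_j + b_{ij}·γ_i and g'_{ij} = −γ_j + η'_{ij}·γ_i = c_{ij}·γ'_j + d_{ij}·γ'_i. Then, setting α_0 := (γ_1 + γ'_1)/2 and α_m := (γ_m − γ'_m)/2 for m = 1,…,n, one has γ_m = α_0 + α_m and γ'_m = α_0 − α_m for all m, and g_{ij}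 = α_i + α_j and g'_{ij} = α_i − α_j for all distinct i,j ∈ {1,…,n}. -/
section SignDetermination

variable {K V : Type*} [Field K] [AddCommGroup V] [Module K V]

lemma LinearIndependent.eq_zero_of_triple {u v w : V} (h : LinearIndependent K ![u, v, w])
    {r s t : K} (h' : r • u + s • v + t • w = 0) : r = 0 ∧ s = 0 ∧ t = 0 := by
  have := Fintype.linearIndependent_iff.mp h ![r, s, t] (by simpa [Fin.sum_univ_three] using h')
  exact ⟨this 0, this 1, this 2⟩

variable {x x' y y' : V} (hli : LinearIndependent K ![y, x', x]) (hsum : x + x' = y + y')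
include hli hsum

lemma eq_neg_one_of_add_smul_eq {η a b : K} (h : y + η • x' = a • y' + b • x) : η = -1 := by
  obtain ⟨ha, hη, -⟩ := hli.eq_zero_of_triple (r := 1 + a) (s := η - a) (t := -(a + b))
    (by linear_combination (norm := module) h - a • hsum)
  linear_combination hη + ha

lemma eq_one_of_neg_add_smul_eq {η a b : K} (h : -y + η • x = a • y' + b • x') : η = 1 := by
  obtain ⟨ha, -, hη⟩ := hli.eq_zero_of_triple (r := a - 1) (s := -(a + b)) (t := η - a)
    (by linear_combination (norm := module) h - a • hsum)
  linear_combination hη + ha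

end SignDetermination

/-- The index `1` of the paper is `⟨0, _⟩ : Fin n`. -/
theorem hp_labeling_standard
    {V : Type*} [AddCommGroup V] [Module ℝ V]
    (n : ℕ) (hn : 2 ≤ n)
    (γ γ' : Fin n → V)
    (hI : ThreeIndep (Sum.elim γ γ'))
    (hconst : ∀ i j, γ i + γ' i = γ j + γ' j)
    (g g' : Fin n → Fin n → V)
    (η η' a b c d : Fin n → Fin n → ℝ)
    (hg1 : ∀ i j, i ≠ j → g i j = γ j + η i j • γ' i)
    (hg2 : ∀ i j, i ≠ j → g i j = a i j • γ' j + b i j • γ i)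
    (hg'1 : ∀ i j, i ≠ j → g' i j = -γ j + η' i j • γ i)
    (hg'2 : ∀ i j, i ≠ j → g' i j = c i j • γ' j + d i j • γ' i) :
    (∀ m : Fin n,
        γ m = (2 : ℝ)⁻¹ • (γ ⟨0, by omega⟩ + γ' ⟨0, by omega⟩)
            + (2 : ℝ)⁻¹ • (γ m - γ' m) ∧
        γ' m = (2 : ℝ)⁻¹ • (γ ⟨0, by omega⟩ + γ' ⟨0, by omega⟩)
            - (2 : ℝ)⁻¹ • (γ m - γ' m)) ∧
    (∀ i j : Fin n, i ≠ j →
        g i j = (2 : ℝ)⁻¹ • (γ i - γ' i) + (2 : ℝ)⁻¹ • (γ j - γ' j) ∧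
        g' i j = (2 : ℝ)⁻¹ • (γ i - γ' i) - (2 : ℝ)⁻¹ • (γ j - γ' j)) := by
  refine ⟨fun m => ?_, fun i j hij => ?_⟩
  · have hsum := hconst m ⟨0, by omega⟩
    constructor <;> linear_combination (norm := module) (2 : ℝ)⁻¹ • hsum
  · have hsum := hconst i j
    have hli : LinearIndependent ℝ ![γ j, γ' i, γ i] :=
      hI (.inl j) (.inr i) (.inl i) Sum.inl_ne_inr (by simpa using hij.symm) Sum.inr_ne_inl
    have hη : η i j = -1 :=
      eq_neg_one_of_add_smul_eq hli hsum ((hg1 i j hij).symm.trans (hg2 i j hij))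
    have hη' : η' i j = 1 :=
      eq_one_of_neg_add_smul_eq hli hsum ((hg'1 i j hij).symm.trans (hg'2 i j hij))
    rw [hg1 i j hij, hg'1 i j hij, hη, hη']
    constructor
    · linear_combination (norm := module) (-(2 : ℝ)⁻¹) • hsum
    · linear_combination (norm := module) (2 : ℝ)⁻¹ • hsum
end

section
/- Let α_1,…,α_4, β_1,…,β_4, γ_1,…,γ_4 be vectors in a real vector space satisfying γ_1 = α_1 − β_1 = α_2 + β_2 = α_3 + β_3 = α_4 + β_4, γ_2 = α_1 − β_2 = α_2 + β_1, γ_3 = α_1 − β_3 = −α_2 + β_4, and γ_4 = α_1 − β_4 = −α_2 + β_3. Then α_1 = (β_1 + β_2 + β_3 + β_4)/2; for i = 2, 3, 4 one has α_i = (−β_1 − β_i + Σ_{j∉{1,i}} β_j)/2; and for each i = 1,…,4 one has γ_i = (−β_i + Σ_{j≠i} β_j)/2. -/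
/-!
Adding `γ₁ = α₁ - β₁ = α₂ + β₂` to `γ₃ = α₁ - β₃ = -α₂ + β₄` eliminates `α₂` and gives
`2 α₁ = β₁ + β₂ + β₃ + β₄`. Every other weight is then read off a single relation:
`γ_i = α₁ - β_i` for all `i`, and `α_i = γ₁ - β_i` for `i ≠ 1`.
(Indices here are the paper's; in the code `α 0` is `α₁`.)
-/

open Finset

theorem eq_half_sum_of_two_triangles {K V : Type*} [Field K] [CharZero K] [AddCommGroup V]
    [Module K V] {a a' b₀ b₁ b₂ b₃ c c' : V}
    (h₀ : c = a - b₀) (h₁ : c = a' + b₁) (h₂ : c' = a - b₂) (h₃ : c' = -a' + b₃) :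
    a = (2 : K)⁻¹ • (b₀ + b₁ + b₂ + b₃) := by
  linear_combination (norm := module) (-(2 : K)⁻¹) • (h₀ - h₁ + h₂ - h₃)

theorem op2_labeling_standard_general
    {V : Type*} [AddCommGroup V] [Module ℝ V]
    (α β γ : Fin 4 → V)
    (h10 : γ 0 = α 0 - β 0) (h11 : γ 0 = α 1 + β 1)
    (h12 : γ 0 = α 2 + β 2) (h13 : γ 0 = α 3 + β 3)
    (h20 : γ 1 = α 0 - β 1)
    (h30 : γ 2 = α 0 - β 2) (h31 : γ 2 = -α 1 + β 3)
    (h40 : γ 3 = α 0 - β 3) :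
    α 0 = (2 : ℝ)⁻¹ • (β 0 + β 1 + β 2 + β 3) ∧
    (∀ i : Fin 4, i ≠ 0 →
      α i = (2 : ℝ)⁻¹ • (-β 0 - β i + ∑ j ∈ Finset.univ \ ({0, i} : Finset (Fin 4)), β j)) ∧
    (∀ i : Fin 4,
      γ i = (2 : ℝ)⁻¹ • (-β i + ∑ j ∈ Finset.univ \ ({i} : Finset (Fin 4)), β j)) := by
  have hα₀ : α 0 = (2 : ℝ)⁻¹ • (β 0 + β 1 + β 2 + β 3) :=
    eq_half_sum_of_two_triangles h10 h11 h30 h31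
  have hγ : ∀ i, γ i = α 0 - β i := by
    intro i
    fin_cases i
    exacts [h10, h20, h30, h40]
  have hα : ∀ i ≠ 0, α i = γ 0 - β i := by
    intro i hi
    fin_cases i
    exacts [absurd rfl hi, eq_sub_of_add_eq h11.symm, eq_sub_of_add_eq h12.symm,
      eq_sub_of_add_eq h13.symm]
  refine ⟨hα₀, fun i hi => ?_, fun i => ?_⟩
  · rw [sum_sdiff_eq_sub (subset_univ _), sum_pair hi.symm, Fin.sum_univ_four, hα i hi, hγ, hα₀]
    module
  · rw [sum_sdiff_eq_sub (subset_univ _), sum_singleton, Fin.sum_univ_four, hγ, hα₀]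
    module

/-- The labeling of the GKM graph `Γ_{𝕆P²}` is standard: the relations forced by the
triangle sublemmas determine all weights in terms of `β_1, …, β_4`.  (Indices are
shifted: `α 0` is the paper's `α_1`, etc.) -/
theorem op2_labeling_standard
    {V : Type*} [AddCommGroup V] [Module ℝ V]
    (α β γ : Fin 4 → V)
    (h10 : γ 0 = α 0 - β 0) (h11 : γ 0 = α 1 + β 1)
    (h12 : γ 0 = α 2 + β 2) (h13 : γ 0 = α 3 + β 3)
    (h20 : γ 1 = α 0 - β 1) (h21 : γ 1 = α 1 + β 0)
    (h30 : γ 2 = α 0 - β 2) (h31 : γ 2 = -α 1 + β 3)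
    (h40 : γ 3 = α 0 - β 3) (h41 : γ 3 = -α 1 + β 2) :
    α 0 = (2 : ℝ)⁻¹ • (β 0 + β 1 + β 2 + β 3) ∧
    (∀ i : Fin 4, i ≠ 0 →
      α i = (2 : ℝ)⁻¹ • (-β 0 - β i + ∑ j ∈ Finset.univ \ ({0, i} : Finset (Fin 4)), β j)) ∧
    (∀ i : Fin 4,
      γ i = (2 : ℝ)⁻¹ • (-β i + ∑ j ∈ Finset.univ \ ({i} : Finset (Fin 4)), β j)) :=
  op2_labeling_standard_general α β γ h10 h11 h12 h13 h20 h30 h31 h40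
end
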